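/- Let the formation control system be a triangulated formation system induced by a triangulated Laman graph G on n ≥ 3 vertices with control laws f_{ij}(·) := u_{ij}(·, d̄_{ij}), and let p ∈ P_G be a critical point of the potential Φ such that (G,p) is a line framework lying on the first coordinate axis (all second coordinates equal zero). Let F_p be the n×n symmetric matrix with off-diagonal entries F_{p,ij} = −f_{ij}(d_{ij}) for (i,j) ∈ E and 0 for non-edges, and diagonal entries chosen so that every row sums to zero. Then F_p has at least one negative eigenvalue, i.e., N₋(F_p) ≥ 1. -/

import Mathlib

open scoped BigOperators

noncomputable section

/-- Points in the Euclidean plane. -/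
abbrev Pt : Type := EuclideanSpace ℝ (Fin 2)

/-- The flattened space of planar configurations indexed by `ι`
(two real coordinates for each vertex). -/
abbrev Conf (ι : Type*) : Type _ := EuclideanSpace ℝ (ι × Fin 2)

/-- The position of agent `i` in the configuration `p`. -/
def pt {ι : Type*} (p : Conf ι) (i : ι) : Pt := WithLp.toLp 2 (fun c => p (i, c))

/-- The sub-configuration of `p` on the vertices in `S`. -/
def restr {ι : Type*} (S : Set ι) (p : Conf ι) : Conf ↥S := WithLp.toLp 2 (fun ic => p ((ic.1 : ι), ic.2))

/-- The configuration space `P_G`: embeddings of the vertex set in the plane for which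
adjacent vertices have distinct positions. -/
def configSpace {ι : Type*} (G : SimpleGraph ι) : Set (Conf ι) :=
  {p | ∀ i j : ι, G.Adj i j → pt p i ≠ pt p j}

/-- A Henneberg sequence for a triangulated Laman graph `G`, encoded by the order
`ord` in which the vertices appear, and for every step `l ≥ 2` the two earlier steps
`par1 l`, `par2 l`, whose (adjacent) vertices the new vertex `ord l` is joined to.
The edges of `G` are exactly the initial edge together with the edges created at
each step. -/
structure Henneberg {ι : Type*} (G : SimpleGraph ι) : Type _ where
  two_le : 2 ≤ Nat.card ι
  ord : Fin (Nat.card ι) ≃ ι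
  par1 : Fin (Nat.card ι) → Fin (Nat.card ι)
  par2 : Fin (Nat.card ι) → Fin (Nat.card ι)
  par1_lt : ∀ l : Fin (Nat.card ι), 2 ≤ (l : ℕ) → par1 l < l
  par2_lt : ∀ l : Fin (Nat.card ι), 2 ≤ (l : ℕ) → par2 l < l
  par_ne : ∀ l : Fin (Nat.card ι), 2 ≤ (l : ℕ) → par1 l ≠ par2 l
  par_adj : ∀ l : Fin (Nat.card ι), 2 ≤ (l : ℕ) → G.Adj (ord (par1 l)) (ord (par2 l))
  edge_iff : ∀ i j : ι, G.Adj i j ↔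
    (s(i, j) = s(ord ⟨0, by omega⟩, ord ⟨1, by omega⟩) ∨
      ∃ l : Fin (Nat.card ι), 2 ≤ (l : ℕ) ∧
        (s(i, j) = s(ord (par1 l), ord l) ∨ s(i, j) = s(ord (par2 l), ord l)))

/-- A graph is a triangulated Laman graph if it is (essentially) a single vertex, or
it can be built by a Henneberg sequence in which each new vertex is joined to the two
endpoints of an existing edge. -/
def IsTriangulatedLaman {ι : Type*} (G : SimpleGraph ι) : Prop :=
  Nat.card ι ≤ 1 ∨ Nonempty (Henneberg G)

open Classical in
/-- The potential `Φ` induced by `G`, with control laws `f i j = u_{ij}(⬝, d̄_{ij})`: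
`Φ(p) = Σ_{(i,j) ∈ E} ∫_1^{‖x_i - x_j‖} s u_{ij}(s, d̄_{ij}) ds`
(each edge is counted once; the double sum counts it twice, whence the factor 1/2). -/
def potential {ι : Type*} [Fintype ι] (G : SimpleGraph ι) (f : ι → ι → ℝ → ℝ)
    (p : Conf ι) : ℝ :=
  (1 / 2) * ∑ i : ι, ∑ j : ι,
    if G.Adj i j then ∫ s in (1 : ℝ)..(dist (pt p i) (pt p j)), s * f i j s else 0

open Classical in
/-- The right-hand side of the formation control system
`ẋ_i = Σ_{j ∈ N_i} u_{ij}(‖x_i - x_j‖, d̄_{ij}) (x_j - x_i)`. -/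
def formationField {ι : Type*} [Fintype ι] (G : SimpleGraph ι) (f : ι → ι → ℝ → ℝ)
    (p : Conf ι) : Conf ι :=
  WithLp.toLp 2 (fun ic => ∑ j : ι,
    if G.Adj ic.1 j then f ic.1 j (dist (pt p ic.1) (pt p j)) * (p (j, ic.2) - p (ic.1, ic.2))
    else 0)

/-- A monotone attraction/repulsion function: `f` is C¹ on `ℝ_{>0}`,
`d(x f(x))/dx > 0` for `x > 0`, `f` has a unique (positive) zero, and
`∫_x^1 s f(s) ds → -∞` as `x → 0⁺`. -/
structure IsMonoAttRep (f : ℝ → ℝ) : Prop where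
  contDiff : ContDiffOn ℝ 1 f (Set.Ioi 0)
  deriv_pos : ∀ x : ℝ, 0 < x → 0 < deriv (fun y => y * f y) x
  unique_zero : ∃! x : ℝ, 0 < x ∧ f x = 0
  collision : Filter.Tendsto (fun x : ℝ => ∫ s in x..(1 : ℝ), s * f s)
    (nhdsWithin 0 (Set.Ioi 0)) Filter.atBot

/-- 2×2 rotation matrices. -/
def IsRotation (θ : Matrix (Fin 2) (Fin 2) ℝ) : Prop := θ * θ.transpose = 1 ∧ θ.det = 1

/-- The action of `γ = (θ, v) ∈ SE(2)` on configurations: `γ·p = (θ x_1 + v, …, θ x_n + v)`. -/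
def se2Act {ι : Type*} (θ : Matrix (Fin 2) (Fin 2) ℝ) (v : Pt) (p : Conf ι) : Conf ι :=
  WithLp.toLp 2 (fun ic => θ.mulVec (WithLp.ofLp (pt p ic.1)) ic.2 + v ic.2)

/-- The SE(2)-orbit `O_p` of a configuration `p`. -/
def se2Orbit {ι : Type*} (p : Conf ι) : Set (Conf ι) :=
  {q | ∃ θ v, IsRotation θ ∧ q = se2Act θ v p}

/-- Rotation by 90 degrees. -/
def rotJ : Matrix (Fin 2) (Fin 2) ℝ := !![0, -1; 1, 0]

/-- The infinitesimal rotation of a configuration. -/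
def infRot {ι : Type*} (p : Conf ι) : Conf ι := WithLp.toLp 2 (fun ic => rotJ.mulVec (WithLp.ofLp (pt p ic.1)) ic.2)

/-- The infinitesimal translation in coordinate direction `c`. -/
def transl (ι : Type*) (c : Fin 2) : Conf ι := WithLp.toLp 2 (fun ic => if ic.2 = c then 1 else 0)

/-- The tangent space at `p` of the SE(2)-orbit `O_p`. -/
def orbitTangent {ι : Type*} (p : Conf ι) : Submodule ℝ (Conf ι) :=
  Submodule.span ℝ {infRot p, transl ι 0, transl ι 1}

/-- The Hessian matrix `H_p = ∂²Φ(p)/∂p²`. -/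
def hessianMat {ι : Type*} [Fintype ι] [DecidableEq ι] (Φ : Conf ι → ℝ) (p : Conf ι) :
    Matrix (ι × Fin 2) (ι × Fin 2) ℝ :=
  Matrix.of fun a b =>
    iteratedFDeriv ℝ 2 Φ p ![EuclideanSpace.single a 1, EuclideanSpace.single b 1]

/-- The Hessian of `Φ` at `p` with respect to the coordinates of the vertices in `S`
(for `Φ` depending only on those coordinates this is the Hessian of the induced
function of the positions of the vertices in `S`). -/
def hessianMatOn {ι : Type*} [Fintype ι] [DecidableEq ι] (Φ : Conf ι → ℝ) (p : Conf ι) (S : Set ι) :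
    Matrix (↥S × Fin 2) (↥S × Fin 2) ℝ :=
  Matrix.of fun a b => hessianMat Φ p ((a.1 : ι), a.2) ((b.1 : ι), b.2)

open Classical in
/-- `N₊(A)`: the number of positive eigenvalues of a real symmetric matrix,
counted with multiplicity. -/
def nPos {m : Type*} [Finite m] (A : Matrix m m ℝ) : ℕ :=
  letI := Fintype.ofFinite m
  letI := Classical.decEq m
  if h : A.IsHermitian then Fintype.card {i // 0 < h.eigenvalues i} else 0

open Classical in
/-- `N₋(A)`: the number of negative eigenvalues of a real symmetric matrix,
counted with multiplicity. -/
def nNeg {m : Type*} [Finite m] (A : Matrix m m ℝ) : ℕ :=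
  letI := Fintype.ofFinite m
  letI := Classical.decEq m
  if h : A.IsHermitian then Fintype.card {i // h.eigenvalues i < 0} else 0

open Classical in
/-- `N₀(A)`: the number of zero eigenvalues of a real symmetric matrix,
counted with multiplicity. -/
def nZero {m : Type*} [Finite m] (A : Matrix m m ℝ) : ℕ :=
  letI := Fintype.ofFinite m
  letI := Classical.decEq m
  if h : A.IsHermitian then Fintype.card {i // h.eigenvalues i = 0} else 0

/-- `Φ` is an equivariant Morse function on `P_G`: it has finitely many critical orbits,
and each critical orbit is nondegenerate (the Hessian has exactly three zero eigenvalues). -/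
def IsEquivariantMorse {ι : Type*} [Fintype ι] [DecidableEq ι] (G : SimpleGraph ι)
    (Φ : Conf ι → ℝ) : Prop :=
  {O : Set (Conf ι) | ∃ p ∈ configSpace G, gradient Φ p = 0 ∧ O = se2Orbit p}.Finite ∧
  ∀ p ∈ configSpace G, gradient Φ p = 0 → nZero (hessianMat Φ p) = 3

/-- `i`, `j`, `k` form a 3-cycle of `G`. -/
def Is3Cycle {ι : Type*} (G : SimpleGraph ι) (i j k : ι) : Prop :=
  G.Adj i j ∧ G.Adj i k ∧ G.Adj j k

/-- A framework `(G, p)` is strongly rigid if every 3-cycle of `G` is embedded by `p`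
as a nondegenerate triangle. -/
def StronglyRigid {ι : Type*} (G : SimpleGraph ι) (p : Conf ι) : Prop :=
  ∀ i j k : ι, Is3Cycle G i j k →
    LinearIndependent ℝ ![pt p j - pt p i, pt p k - pt p i]

/-- The target distances satisfy the strict triangle inequalities associated with `G`. -/
def StrictTriangleIneqs {ι : Type*} (G : SimpleGraph ι) (dbar : ι → ι → ℝ) : Prop :=
  ∀ i j k : ι, Is3Cycle G i j k →
    dbar j k < dbar i j + dbar i k ∧ dbar i k < dbar i j + dbar j k ∧
      dbar i j < dbar i k + dbar j k

/-- A triangulated formation system: a formation control system induced by a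
triangulated Laman graph, with target distances satisfying the strict triangle
inequalities, monotone attraction/repulsion control laws vanishing at the target
distances, and whose potential is an equivariant Morse function. -/
structure IsTriFormation {ι : Type*} [Fintype ι] [DecidableEq ι] (G : SimpleGraph ι)
    (f : ι → ι → ℝ → ℝ) (dbar : ι → ι → ℝ) : Prop where
  laman : IsTriangulatedLaman G
  fsymm : ∀ i j, f i j = f j i
  dsymm : ∀ i j, dbar i j = dbar j i
  dpos : ∀ i j, G.Adj i j → 0 < dbar i j
  mono : ∀ i j, G.Adj i j → IsMonoAttRep (f i j)
  fzero : ∀ i j, G.Adj i j → f i j (dbar i j) = 0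
  triangle : StrictTriangleIneqs G dbar
  morse : IsEquivariantMorse G (potential G f)

/-- The (critical) orbit of `p` is exponentially stable: the Hessian of `Φ` at `p` has
exactly three zero eigenvalues and no negative eigenvalues (all the others positive). -/
def ExpStableAt {ι : Type*} [Fintype ι] [DecidableEq ι] (Φ : Conf ι → ℝ) (p : Conf ι) : Prop :=
  nZero (hessianMat Φ p) = 3 ∧ nNeg (hessianMat Φ p) = 0

/-- Generating relation for the independent partition: at each step `l ≥ 2` of the
Henneberg sequence in which the new vertex is aligned with its two parents, the two
new edges are related to the parent edge. -/
def triGen {ι : Type*} {G : SimpleGraph ι} (H : Henneberg G) (p : Conf ι) :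
    Sym2 ι → Sym2 ι → Prop := fun e e' =>
  ∃ l : Fin (Nat.card ι), 2 ≤ (l : ℕ) ∧
    Collinear ℝ {pt p (H.ord (H.par1 l)), pt p (H.ord (H.par2 l)), pt p (H.ord l)} ∧
    e' = s(H.ord (H.par1 l), H.ord (H.par2 l)) ∧
    (e = s(H.ord (H.par1 l), H.ord l) ∨ e = s(H.ord (H.par2 l), H.ord l))

/-- The independent partition of the edge set of `G` for the framework `(G, p)`,
computed along the Henneberg sequence `H`. -/
def indepPartition {ι : Type*} {G : SimpleGraph ι} (H : Henneberg G) (p : Conf ι) :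
    Set (Set (Sym2 ι)) :=
  {C | ∃ e ∈ G.edgeSet, C = {e' | e' ∈ G.edgeSet ∧ Relation.EqvGen (triGen H p) e e'}}

/-- The set `V_i` of vertices incident to the edges in a class `C`. -/
def classVerts {ι : Type*} (C : Set (Sym2 ι)) : Set ι := {v | ∃ e ∈ C, v ∈ e}

end

open Classical in
/-- The `n × n` symmetric zero-row-sum matrix `F_p` with off-diagonal entries
`-f_{ij}(d_{ij})` on edges and `0` on non-edges. -/
noncomputable def Fmat {ι : Type*} [Fintype ι] [DecidableEq ι] (G : SimpleGraph ι)
    (f : ι → ι → ℝ → ℝ) (p : Conf ι) : Matrix ι ι ℝ :=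
  Matrix.of fun i j =>
    if i = j then
      ∑ k ∈ Finset.univ.erase i,
        (if G.Adj i k then f i k (dist (pt p i) (pt p k)) else 0)
    else if G.Adj i j then -(f i j (dist (pt p i) (pt p j))) else 0

/-!
Write `x i` for the first coordinate of agent `i` and `w i j = f_ij(d_ij)` on edges. Criticality of
`p` says that `w` is a self-stress of the line framework `(G, x)`, and `2 yᵀ F_p y` is the energy
`∑ w_ij (y_i - y_j)²`. Since `s ↦ s f_ij(s)` is increasing, the sign of `w_ij` tells whether the
edge is longer or shorter than its target, so by the strict triangle inequalities no triangle can
have both short sides at least, and the long side at most, their target lengths.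

Remove the vertices in reverse Henneberg order. If the last vertex `z`, joined to `a` and `b`,
has `w_za + w_zb < 0`, the indicator of `z` has negative energy. Otherwise the Schur complement at
`z` (Kron reduction) is a self-stress on the smaller graph, with the same triangle sign pattern,
whose energies are all attained by `w`; the triangle `zab` forces it to be nonzero on `ab`. A
self-stress of the initial edge vanishes, so the process must stop at a vector of negative energy.
-/

section Stress

variable {ι : Type*} [Fintype ι]

def netForce (w : ι → ι → ℝ) (x : ι → ℝ) (i : ι) : ℝ := ∑ j, w i j * (x j - x i)

def stressForm (w : ι → ι → ℝ) (y : ι → ℝ) : ℝ := ∑ i, ∑ j, w i j * (y i - y j) ^ 2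

lemma sum_sum_mul_sub_mul_sub {w : ι → ι → ℝ} (hw : ∀ i j, w i j = w j i) (a b : ι → ℝ) :
    ∑ i, ∑ j, w i j * ((a i - a j) * (b i - b j)) = -2 * ∑ i, b i * netForce w a i := by
  have hswap : ∑ i, ∑ j, w i j * (a i - a j) * b j = -∑ i, ∑ j, w i j * (a i - a j) * b i := by
    rw [Finset.sum_comm, ← Finset.sum_neg_distrib]
    refine Finset.sum_congr rfl fun i _ => ?_
    rw [← Finset.sum_neg_distrib]
    refine Finset.sum_congr rfl fun j _ => ?_
    rw [hw]; ring
  calc ∑ i, ∑ j, w i j * ((a i - a j) * (b i - b j))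
      = ∑ i, ∑ j, w i j * (a i - a j) * b i - ∑ i, ∑ j, w i j * (a i - a j) * b j := by
        simp only [← Finset.sum_sub_distrib]
        refine Finset.sum_congr rfl fun i _ => Finset.sum_congr rfl fun j _ => ?_
        ring
    _ = -2 * ∑ i, b i * netForce w a i := by
        rw [hswap, sub_neg_eq_add, ← two_mul]
        simp only [netForce, Finset.mul_sum]
        refine Finset.sum_congr rfl fun i _ => Finset.sum_congr rfl fun j _ => ?_
        ring

lemma stressForm_eq_neg_two_mul {w : ι → ι → ℝ} (hw : ∀ i j, w i j = w j i) (y : ι → ℝ) :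
    stressForm w y = -2 * ∑ i, y i * netForce w y i := by
  rw [← sum_sum_mul_sub_mul_sub hw]
  simp only [stressForm, sq]

lemma stressForm_add (w₁ w₂ : ι → ι → ℝ) (y : ι → ℝ) :
    stressForm (w₁ + w₂) y = stressForm w₁ y + stressForm w₂ y := by
  simp only [stressForm, Pi.add_apply, add_mul, Finset.sum_add_distrib]

lemma stressForm_sub (w₁ w₂ : ι → ι → ℝ) (y : ι → ℝ) :
    stressForm (w₁ - w₂) y = stressForm w₁ y - stressForm w₂ y := by
  simp only [stressForm, Pi.sub_apply, sub_mul, Finset.sum_sub_distrib]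

lemma netForce_add (w₁ w₂ : ι → ι → ℝ) (x : ι → ℝ) (i : ι) :
    netForce (w₁ + w₂) x i = netForce w₁ x i + netForce w₂ x i := by
  simp only [netForce, Pi.add_apply, add_mul, Finset.sum_add_distrib]

lemma netForce_sub (w₁ w₂ : ι → ι → ℝ) (x : ι → ℝ) (i : ι) :
    netForce (w₁ - w₂) x i = netForce w₁ x i - netForce w₂ x i := by
  simp only [netForce, Pi.sub_apply, sub_mul, Finset.sum_sub_distrib]

end Stress

section Edge
variable {ι : Type*} [DecidableEq ι]

def edgeWeight (a b : ι) (c : ℝ) (i j : ι) : ℝ := if s(i, j) = s(a, b) then c else 0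

lemma edgeWeight_comm (a b : ι) (c : ℝ) (i j : ι) :
    edgeWeight a b c i j = edgeWeight a b c j i := by
  simp only [edgeWeight, Sym2.eq_swap]

lemma edgeWeight_apply_of_ne {a b : ι} (hab : a ≠ b) (c : ℝ) (i j : ι) : edgeWeight a b c i j =
    (if i = a ∧ j = b then c else 0) + (if i = b ∧ j = a then c else 0) := by
  unfold edgeWeight
  by_cases h1 : i = a <;> by_cases h2 : j = b <;> by_cases h3 : i = b <;> by_cases h4 : j = a <;>
    simp_all

variable [Fintype ι]

lemma stressForm_edgeWeight {a b : ι} (hab : a ≠ b) (c : ℝ) (y : ι → ℝ) :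
    stressForm (edgeWeight a b c) y = 2 * c * (y a - y b) ^ 2 := by
  simp only [stressForm, edgeWeight_apply_of_ne hab, ite_and, add_mul, ite_mul, zero_mul,
    Finset.sum_add_distrib, Finset.sum_ite_irrel, Finset.sum_ite_eq', Finset.mem_univ, ↓reduceIte,
    Finset.sum_const_zero]
  ring

lemma netForce_edgeWeight {a b : ι} (hab : a ≠ b) (c : ℝ) (x : ι → ℝ) (i : ι) :
    netForce (edgeWeight a b c) x i =
      (if i = a then c * (x b - x a) else 0) + (if i = b then c * (x a - x b) else 0) := by
  simp only [netForce, edgeWeight_apply_of_ne hab, ite_and, add_mul, Finset.sum_add_distrib]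
  split_ifs <;> simp_all

end Edge

section Kron
variable {ι : Type*} [DecidableEq ι]

/-- The Schur complement of the stress matrix at a vertex `z` whose only neighbours are `a` and
`b` (star–mesh transform): the edges `za`, `zb` give way to an edge `ab` of weight
`w_za w_zb / (w_za + w_zb)`, which is `0` when the denominator vanishes. -/
noncomputable def kronReduce (w : ι → ι → ℝ) (z a b : ι) : ι → ι → ℝ :=
  w - edgeWeight z a (w z a) - edgeWeight z b (w z b) +
    edgeWeight a b (w z a * w z b / (w z a + w z b))

variable {w : ι → ι → ℝ} {z a b : ι}

lemma kronReduce_comm (hw : ∀ i j, w i j = w j i) (i j : ι) :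
    kronReduce w z a b i j = kronReduce w z a b j i := by
  simp only [kronReduce, Pi.add_apply, Pi.sub_apply, hw i j, edgeWeight_comm _ _ _ i j]

lemma kronReduce_apply_of_ne {i j : ι} (hi : i ≠ z) (hj : j ≠ z) :
    kronReduce w z a b i j = w i j + edgeWeight a b (w z a * w z b / (w z a + w z b)) i j := by
  have hz : ∀ v c, edgeWeight z v c i j = 0 := fun v c => by
    simp only [edgeWeight, Sym2.eq_iff]; grind
  simp only [kronReduce, Pi.add_apply, Pi.sub_apply, hz, sub_zero]

lemma kronReduce_apply_left (hnbr : ∀ j, w z j ≠ 0 → j = a ∨ j = b) (hza : z ≠ a) (hzb : z ≠ b)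
    (hab : a ≠ b) (j : ι) : kronReduce w z a b z j = 0 := by
  simp only [kronReduce, Pi.add_apply, Pi.sub_apply, edgeWeight_apply_of_ne hza,
    edgeWeight_apply_of_ne hzb, edgeWeight_apply_of_ne hab]
  by_cases hja : j = a
  · subst hja; simp [hza, hzb, hab]
  by_cases hjb : j = b
  · subst hjb; simp [hza, hzb, hab.symm]
  have : w z j = 0 := by by_contra h; rcases hnbr j h with h | h <;> contradiction
  simp [hza, hzb, hja, hjb, this]

lemma kronReduce_sign (hw : ∀ i j, w i j = w j i) {u v : ι} (hu : u ≠ z) (hv : v ≠ z)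
    (hsign : 0 ≤ w z a * w z b / (w z a + w z b) * w a b) :
    (w u v < 0 → kronReduce w z a b u v < 0) ∧ (0 < w u v → 0 < kronReduce w z a b u v) := by
  rw [kronReduce_apply_of_ne hu hv, edgeWeight]
  split_ifs with huv
  · have : w u v = w a b := by
      rcases Sym2.eq_iff.mp huv with ⟨rfl, rfl⟩ | ⟨rfl, rfl⟩
      exacts [rfl, hw _ _]
    rw [this]
    constructor <;> intro h <;> nlinarith
  · simp

variable [Fintype ι]

lemma stressForm_kronReduce (hza : z ≠ a) (hzb : z ≠ b) (hab : a ≠ b) (y : ι → ℝ) :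
    stressForm w y = stressForm (kronReduce w z a b) y + 2 * (w z a * (y z - y a) ^ 2 +
      w z b * (y z - y b) ^ 2 - w z a * w z b / (w z a + w z b) * (y a - y b) ^ 2) := by
  simp only [kronReduce, stressForm_add, stressForm_sub, stressForm_edgeWeight hza,
    stressForm_edgeWeight hzb, stressForm_edgeWeight hab]
  ring

lemma stressForm_update_of_forall_eq_zero (hw : ∀ i j, w i j = w j i) (hz : ∀ j, w z j = 0)
    (y : ι → ℝ) (t : ℝ) : stressForm w (Function.update y z t) = stressForm w y := by
  refine Finset.sum_congr rfl fun i _ => Finset.sum_congr rfl fun j _ => ?_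
  by_cases hi : i = z
  · simp [hi, hz]
  by_cases hj : j = z
  · simp [hj, hw i z, hz]
  simp [hi, hj]

omit [DecidableEq ι] in
lemma netForce_eq_of_neighbors (hnbr : ∀ j, w z j ≠ 0 → j = a ∨ j = b) (hab : a ≠ b)
    (x : ι → ℝ) : netForce w x z = w z a * (x a - x z) + w z b * (x b - x z) := by
  rw [netForce, Fintype.sum_eq_add a b hab]
  intro j ⟨hja, hjb⟩
  by_contra h
  rcases hnbr j (left_ne_zero_of_mul h) with h | h <;> contradiction

lemma eq_zero_of_balanced_of_add_eq_zero {α β xa xb xz : ℝ}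
    (h : α * (xa - xz) + β * (xb - xz) = 0) (hx : xa ≠ xb) (hs : α + β = 0) : α = 0 ∧ β = 0 := by
  have hα : α * (xa - xb) = 0 := by linear_combination h - (xb - xz) * hs
  have hα : α = 0 := (mul_eq_zero.mp hα).resolve_right (sub_ne_zero.mpr hx)
  exact ⟨hα, by linear_combination hs - hα⟩

lemma netForce_kronReduce (hnbr : ∀ j, w z j ≠ 0 → j = a ∨ j = b) (hza : z ≠ a) (hzb : z ≠ b)
    (hab : a ≠ b) {x : ι → ℝ} (hx : x a ≠ x b) (hz : netForce w x z = 0) (i : ι) :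
    netForce (kronReduce w z a b) x i = netForce w x i := by
  rw [netForce_eq_of_neighbors hnbr hab] at hz
  have hc : w z a * w z b / (w z a + w z b) * (x b - x a) = w z a * (x z - x a) ∧
      w z a * w z b / (w z a + w z b) * (x a - x b) = w z b * (x z - x b) := by
    by_cases hs : w z a + w z b = 0
    · obtain ⟨hα, hβ⟩ := eq_zero_of_balanced_of_add_eq_zero hz hx hs
      simp [hα, hβ]
    · constructor <;> field_simp
      · linear_combination w z a * hz
      · linear_combination w z b * hz
  simp only [kronReduce, netForce_add, netForce_sub, netForce_edgeWeight hza,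
    netForce_edgeWeight hzb, netForce_edgeWeight hab]
  rcases eq_or_ne i z with rfl | hiz
  · simp only [↓reduceIte, if_neg hza, if_neg hzb]
    linear_combination -hz
  · split_ifs <;> subst_vars <;> simp_all

lemma stressForm_update_kronReduce (hw : ∀ i j, w i j = w j i)
    (hnbr : ∀ j, w z j ≠ 0 → j = a ∨ j = b) (hza : z ≠ a) (hzb : z ≠ b) (hab : a ≠ b)
    (hs : w z a + w z b = 0 → w z a = 0 ∧ w z b = 0) (y : ι → ℝ) :
    stressForm w (Function.update y z ((w z a * y a + w z b * y b) / (w z a + w z b))) =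
      stressForm (kronReduce w z a b) y := by
  rw [stressForm_kronReduce hza hzb hab, stressForm_update_of_forall_eq_zero
    (kronReduce_comm hw) (kronReduce_apply_left hnbr hza hzb hab)]
  simp only [Function.update_self, Function.update_of_ne hza.symm, Function.update_of_ne hzb.symm]
  by_cases h : w z a + w z b = 0
  · simp [(hs h).1, (hs h).2]
  · field_simp
    ring

end Kron

section LineStress
variable {ι : Type*} [Fintype ι] {G : SimpleGraph ι} {x : ι → ℝ}

/-- A self-stress of the line framework `(G, x)` on `S`; `triangle` is the sign pattern that the
strict triangle inequalities impose on a triangle whose vertices lie on the line in the order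
`i, k, j`. -/
structure IsLineStress (G : SimpleGraph ι) (x : ι → ℝ) (S : Set ι) (w : ι → ι → ℝ) : Prop where
  symm : ∀ i j, w i j = w j i
  support : ∀ i j, w i j ≠ 0 → G.Adj i j ∧ i ∈ S ∧ j ∈ S
  balanced : ∀ i, netForce w x i = 0
  triangle : ∀ ⦃i j k⦄, i ∈ S → j ∈ S → k ∈ S → G.Adj i j → G.Adj i k → G.Adj j k →
    x i < x k → x k < x j → w i k < 0 ∨ w k j < 0 ∨ 0 < w i j

variable {S : Set ι} {w : ι → ι → ℝ}

lemma IsLineStress.eq_zero_of_subset_pair (hx : ∀ i j, G.Adj i j → x i ≠ x j)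
    (hw : IsLineStress G x S w) {u v : ι} (hS : S ⊆ {u, v}) : w = 0 := by
  by_contra hne
  obtain ⟨i, j, hij⟩ : ∃ i j, w i j ≠ 0 := by simpa [funext_iff] using hne
  obtain ⟨hadj, hi, hj⟩ := hw.support i j hij
  have hforce : netForce w x i = w i j * (x j - x i) := by
    refine Fintype.sum_eq_single j fun l hlj => ?_
    by_contra hl
    obtain ⟨hadj', -, hl⟩ := hw.support i l (left_ne_zero_of_mul hl)
    have := hS hi; have := hS hj; have := hS hl
    simp only [Set.mem_insert_iff, Set.mem_singleton_iff] at *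
    grind [hadj.ne, hadj'.ne]
  exact mul_ne_zero hij (sub_ne_zero.mpr (hx i j hadj).symm) (hforce ▸ hw.balanced i)

lemma IsLineStress.sign_of_balanced (hx : ∀ i j, G.Adj i j → x i ≠ x j)
    (hw : IsLineStress G x S w) {z a b : ι} (hz : z ∈ S) (ha : a ∈ S) (hb : b ∈ S)
    (hza : G.Adj z a) (hzb : G.Adj z b) (hab : G.Adj a b)
    (hbal : w z a * (x a - x z) + w z b * (x b - x z) = 0) (hsum : 0 ≤ w z a + w z b) :
    w a b ≠ 0 ∧ 0 ≤ w z a * w z b * w a b := by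
  wlog hlt : x a < x b generalizing a b
  · have hlt' : x b < x a := lt_of_le_of_ne (not_lt.mp hlt) (hx b a hab.symm)
    obtain ⟨h1, h2⟩ := this hb ha hzb hza hab.symm (by linarith) (by linarith) hlt'
    rw [hw.symm b a] at h1 h2
    exact ⟨h1, h2.trans_eq (by ring)⟩
  -- The balance at `z` fixes the signs of `w z a`, `w z b` by the position of `z`, and the
  -- triangle `zab` then fixes the sign of `w a b`.
  rcases lt_or_gt_of_ne (hx z a hza) with hza' | haz
  · have hα : 0 ≤ w z a := by nlinarith
    have hβ : w z b ≤ 0 := by nlinarith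
    have hneg : w a b < 0 := by
      have := hw.triangle hz hb ha hzb hza hab.symm hza' hlt
      grind
    exact ⟨hneg.ne, by nlinarith [mul_nonpos_of_nonneg_of_nonpos hα hβ]⟩
  rcases lt_or_gt_of_ne (hx z b hzb) with hzb' | hbz
  · have hα : 0 ≤ w z a := by nlinarith
    have hβ : 0 ≤ w z b := by nlinarith
    have hpos : 0 < w a b := by
      have := hw.triangle ha hb hz hab hza.symm hzb.symm haz hzb'
      rw [hw.symm a z] at this
      grind
    exact ⟨hpos.ne', by positivity⟩
  · have hα : w z a ≤ 0 := by nlinarith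
    have hβ : 0 ≤ w z b := by nlinarith
    have hneg : w a b < 0 := by
      have := hw.triangle ha hz hb hza.symm hab hzb hlt hbz
      rw [hw.symm a z, hw.symm b z] at this
      grind
    exact ⟨hneg.ne, by nlinarith [mul_nonpos_of_nonneg_of_nonpos hβ hα]⟩

end LineStress

section Elimination
variable {ι : Type*} [Fintype ι] [DecidableEq ι] {G : SimpleGraph ι} {x : ι → ℝ}
  {S : Set ι} {w : ι → ι → ℝ} {z a b : ι}

lemma isLineStress_kronReduce (hw : IsLineStress G x (insert z S) w) (hzS : z ∉ S)
    (ha : a ∈ S) (hb : b ∈ S) (hza : G.Adj z a) (hzb : G.Adj z b) (hab : G.Adj a b)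
    (hnbr : ∀ j, w z j ≠ 0 → j = a ∨ j = b) (hx : x a ≠ x b)
    (hsign : 0 ≤ w z a * w z b / (w z a + w z b) * w a b) :
    IsLineStress G x S (kronReduce w z a b) := by
  have hrow := kronReduce_apply_left hnbr hza.ne hzb.ne hab.ne
  have hcomm := kronReduce_comm (z := z) (a := a) (b := b) hw.symm
  have hne : ∀ u, u ∈ S → u ≠ z := fun u hu h => hzS (h ▸ hu)
  refine ⟨kronReduce_comm hw.symm, fun i j hij => ?_, fun i => ?_, ?_⟩
  · have hi : i ≠ z := fun h => hij (h ▸ hrow j)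
    have hj : j ≠ z := fun h => hij (by rw [h, hcomm, hrow])
    rw [kronReduce_apply_of_ne hi hj, edgeWeight] at hij
    by_cases hs : s(i, j) = s(a, b)
    · rcases Sym2.eq_iff.mp hs with ⟨rfl, rfl⟩ | ⟨rfl, rfl⟩
      exacts [⟨hab, ha, hb⟩, ⟨hab.symm, hb, ha⟩]
    · rw [if_neg hs, add_zero] at hij
      obtain ⟨hadj, hi', hj'⟩ := hw.support i j hij
      exact ⟨hadj, hi'.resolve_left hi, hj'.resolve_left hj⟩
  · rw [netForce_kronReduce hnbr hza.ne hzb.ne hab.ne hx (hw.balanced z)]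
    exact hw.balanced i
  · intro i j k hi hj hk hij hik hjk hik' hkj'
    rcases hw.triangle (.inr hi) (.inr hj) (.inr hk) hij hik hjk hik' hkj' with h | h | h
    · exact .inl ((kronReduce_sign hw.symm (hne i hi) (hne k hk) hsign).1 h)
    · exact .inr (.inl ((kronReduce_sign hw.symm (hne k hk) (hne j hj) hsign).1 h))
    · exact .inr (.inr ((kronReduce_sign hw.symm (hne i hi) (hne j hj) hsign).2 h))

theorem IsLineStress.eliminate (hx : ∀ i j, G.Adj i j → x i ≠ x j)
    (hw : IsLineStress G x (insert z S) w) (hzS : z ∉ S) (ha : a ∈ S) (hb : b ∈ S)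
    (hza : G.Adj z a) (hzb : G.Adj z b) (hab : G.Adj a b)
    (hnbr : ∀ j, w z j ≠ 0 → j = a ∨ j = b) :
    (∃ y, stressForm w y < 0) ∨ ∃ w', IsLineStress G x S w' ∧ w' ≠ 0 ∧
      ((∃ y, stressForm w' y < 0) → ∃ y, stressForm w y < 0) := by
  have hbal : w z a * (x a - x z) + w z b * (x b - x z) = 0 := by
    rw [← netForce_eq_of_neighbors hnbr hab.ne]
    exact hw.balanced z
  rcases lt_or_ge (w z a + w z b) 0 with hneg | hsum
  · refine .inl ⟨Function.update 0 z 1, ?_⟩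
    have h0 : stressForm (kronReduce w z a b) 0 = 0 := by simp [stressForm]
    rw [stressForm_kronReduce hza.ne hzb.ne hab.ne, stressForm_update_of_forall_eq_zero
      (kronReduce_comm hw.symm) (kronReduce_apply_left hnbr hza.ne hzb.ne hab.ne), h0]
    simp only [Function.update_self, Function.update_of_ne hza.ne', Function.update_of_ne hzb.ne',
      Pi.zero_apply]
    linarith
  obtain ⟨hab0, hprod⟩ :=
    hw.sign_of_balanced hx (.inl rfl) (.inr ha) (.inr hb) hza hzb hab hbal hsum
  have hsign : 0 ≤ w z a * w z b / (w z a + w z b) * w a b := by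
    rw [div_mul_eq_mul_div]
    exact div_nonneg hprod hsum
  refine .inr ⟨kronReduce w z a b,
    isLineStress_kronReduce hw hzS ha hb hza hzb hab hnbr (hx a b hab) hsign, fun h => ?_,
    fun ⟨y, hy⟩ => ⟨_, (stressForm_update_kronReduce hw.symm hnbr hza.ne hzb.ne hab.ne
      (eq_zero_of_balanced_of_add_eq_zero hbal (hx a b hab)) y).trans_lt hy⟩⟩
  have hzero := congrFun (congrFun h a) b
  rw [kronReduce_apply_of_ne hza.ne' hzb.ne', edgeWeight, if_pos rfl, Pi.zero_apply,
    Pi.zero_apply] at hzero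
  have : (w a b + w z a * w z b / (w z a + w z b)) * w a b = 0 := by rw [hzero, zero_mul]
  nlinarith [sq_pos_of_ne_zero hab0]

end Elimination

namespace Henneberg
variable {ι : Type*} {G : SimpleGraph ι} (H : Henneberg G)

def rank (v : ι) : ℕ := H.ord.symm v

def stage (k : ℕ) : Set ι := {v | H.rank v < k}

lemma rank_ord (l : Fin (Nat.card ι)) : H.rank (H.ord l) = l := by
  simp [rank]

lemma stage_subset_pair {k : ℕ} (hk : k ≤ 2) :
    H.stage k ⊆ {H.ord ⟨0, by have := H.two_le; omega⟩, H.ord ⟨1, by have := H.two_le; omega⟩} := by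
  intro t ht
  rw [← H.ord.apply_symm_apply t]
  have ht : (H.ord.symm t : ℕ) < 2 := lt_of_lt_of_le ht hk
  rcases (by omega : (H.ord.symm t : ℕ) = 0 ∨ (H.ord.symm t : ℕ) = 1) with h | h
  · exact .inl (congrArg H.ord (Fin.ext h))
  · exact .inr (congrArg H.ord (Fin.ext h))

lemma stage_eq_univ {k : ℕ} (hk : Nat.card ι ≤ k) : H.stage k = Set.univ :=
  Set.eq_univ_of_forall fun v => lt_of_lt_of_le (H.ord.symm v).isLt hk

lemma stage_succ {k : ℕ} (hk : k < Nat.card ι) :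
    H.stage (k + 1) = insert (H.ord ⟨k, hk⟩) (H.stage k) := by
  ext v
  simp only [stage, rank, Set.mem_insert_iff, Set.mem_ofPred_eq, ← Equiv.symm_apply_eq,
    Fin.ext_iff]
  omega

lemma ord_mem_stage {l : Fin (Nat.card ι)} {k : ℕ} (hl : (l : ℕ) < k) : H.ord l ∈ H.stage k := by
  simpa [stage, rank_ord] using hl

lemma ord_notMem_stage (l : Fin (Nat.card ι)) : H.ord l ∉ H.stage l := by
  simp [stage, rank_ord]

lemma adj_ord_par1 {l : Fin (Nat.card ι)} (hl : 2 ≤ (l : ℕ)) : G.Adj (H.ord l) (H.ord (H.par1 l)) :=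
  (H.edge_iff _ _).mpr (.inr ⟨l, hl, .inl Sym2.eq_swap⟩)

lemma adj_ord_par2 {l : Fin (Nat.card ι)} (hl : 2 ≤ (l : ℕ)) : G.Adj (H.ord l) (H.ord (H.par2 l)) :=
  (H.edge_iff _ _).mpr (.inr ⟨l, hl, .inr Sym2.eq_swap⟩)

lemma eq_par_of_adj {l : Fin (Nat.card ι)} (hl : 2 ≤ (l : ℕ)) {j : ι} (hadj : G.Adj (H.ord l) j)
    (hj : H.rank j < l) : j = H.ord (H.par1 l) ∨ j = H.ord (H.par2 l) := by
  rw [← H.ord.apply_symm_apply j] at hadj ⊢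
  have hj : (H.ord.symm j : ℕ) < l := hj
  rcases (H.edge_iff _ _).mp hadj with h | ⟨l', hl', h | h⟩ <;>
    simp only [Sym2.eq_iff, H.ord.injective.eq_iff, Fin.ext_iff] at h
  · omega
  · have := H.par1_lt l' hl'
    rcases h with ⟨h1, h2⟩ | ⟨h1, h2⟩
    · omega
    · obtain rfl : l = l' := Fin.ext h1
      exact .inl (congrArg H.ord (Fin.ext h2))
  · have := H.par2_lt l' hl'
    rcases h with ⟨h1, h2⟩ | ⟨h1, h2⟩
    · omega
    · obtain rfl : l = l' := Fin.ext h1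
      exact .inr (congrArg H.ord (Fin.ext h2))

variable [Fintype ι] [DecidableEq ι] {x : ι → ℝ} {w : ι → ι → ℝ}

theorem eliminate_stage (hx : ∀ i j, G.Adj i j → x i ≠ x j) {k : ℕ} (hk : k < Nat.card ι)
    (hk2 : 2 ≤ k) (hw : IsLineStress G x (H.stage (k + 1)) w) :
    (∃ y, stressForm w y < 0) ∨ ∃ w', IsLineStress G x (H.stage k) w' ∧ w' ≠ 0 ∧
      ((∃ y, stressForm w' y < 0) → ∃ y, stressForm w y < 0) := by
  set l : Fin (Nat.card ι) := ⟨k, hk⟩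
  rw [H.stage_succ hk] at hw
  refine hw.eliminate hx (H.ord_notMem_stage l) (H.ord_mem_stage (H.par1_lt l hk2))
    (H.ord_mem_stage (H.par2_lt l hk2))
    (H.adj_ord_par1 hk2) (H.adj_ord_par2 hk2) (H.par_adj l hk2) fun j hj => ?_
  obtain ⟨hadj, -, hj'⟩ := hw.support _ _ hj
  exact H.eq_par_of_adj hk2 hadj (hj'.resolve_left hadj.ne')

theorem exists_stressForm_neg (hx : ∀ i j, G.Adj i j → x i ≠ x j) (k : ℕ) :
    ∀ w, IsLineStress G x (H.stage k) w → w ≠ 0 → ∃ y, stressForm w y < 0 := by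
  induction k with
  | zero =>
    exact fun w hw hne => absurd (hw.eq_zero_of_subset_pair hx (H.stage_subset_pair (by omega))) hne
  | succ k ih =>
    intro w hw hne
    rcases le_or_gt (k + 1) 2 with hk2 | hk2
    · exact absurd (hw.eq_zero_of_subset_pair hx (H.stage_subset_pair hk2)) hne
    rcases lt_or_ge k (Nat.card ι) with hk | hk
    · rcases H.eliminate_stage hx hk (by omega) hw with h | ⟨w', hw', hne', hlift⟩
      exacts [h, hlift (ih w' hw' hne')]
    · rw [H.stage_eq_univ (by omega : Nat.card ι ≤ k + 1), ← H.stage_eq_univ hk] at hw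
      exact ih w hw hne

end Henneberg

theorem IsTriangulatedLaman.exists_stressForm_neg {ι : Type*} [Fintype ι] [DecidableEq ι]
    {G : SimpleGraph ι} {x : ι → ℝ} {w : ι → ι → ℝ} (hG : IsTriangulatedLaman G)
    (hx : ∀ i j, G.Adj i j → x i ≠ x j) (h3 : 3 ≤ Nat.card ι)
    (hw : IsLineStress G x Set.univ w) : ∃ y, stressForm w y < 0 := by
  obtain ⟨H⟩ := hG.resolve_left (by omega)
  obtain ⟨k, hk⟩ : ∃ k, Nat.card ι = k + 1 := ⟨Nat.card ι - 1, by omega⟩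
  rw [← H.stage_eq_univ hk.le] at hw
  rcases H.eliminate_stage hx (k := k) (by omega) (by omega) hw with h | ⟨w', hw', hne', hlift⟩
  exacts [h, hlift (H.exists_stressForm_neg hx k w' hw' hne')]

section StressMatrix
open Matrix
variable {ι : Type*} (G : SimpleGraph ι) (f : ι → ι → ℝ → ℝ) (p : Conf ι)

open Classical in
noncomputable def edgeForce (i j : ι) : ℝ := if G.Adj i j then f i j (dist (pt p i) (pt p j)) else 0

variable {f}

lemma edgeForce_comm (hf : ∀ i j, f i j = f j i) (i j : ι) :
    edgeForce G f p i j = edgeForce G f p j i := by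
  unfold edgeForce
  rw [G.adj_comm, hf, dist_comm]

variable [Fintype ι] [DecidableEq ι]

lemma Fmat_mulVec (y : ι → ℝ) : Fmat G f p *ᵥ y = fun i => -netForce (edgeForce G f p) y i := by
  ext i
  have hdiag : ∑ j ∈ Finset.univ.erase i, edgeForce G f p i j * (y j - y i) =
      netForce (edgeForce G f p) y i := Finset.sum_erase _ (by simp)
  rw [Matrix.mulVec, dotProduct, ← Finset.add_sum_erase _ _ (Finset.mem_univ i), ← hdiag]
  simp only [Fmat, Matrix.of_apply, if_pos, Finset.sum_mul, ← Finset.sum_neg_distrib,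
    ← Finset.sum_add_distrib]
  refine Finset.sum_congr rfl fun j hj => ?_
  rw [if_neg (Finset.ne_of_mem_erase hj).symm]
  simp only [edgeForce]
  split_ifs <;> ring

lemma Fmat_isHermitian (hf : ∀ i j, f i j = f j i) : (Fmat G f p).IsHermitian := by
  ext i j
  rw [Matrix.conjTranspose_apply, star_trivial]
  rcases eq_or_ne i j with rfl | h
  · rfl
  simp only [Fmat, Matrix.of_apply, if_neg h, if_neg h.symm]
  rw [G.adj_comm, hf, dist_comm]

lemma two_mul_dotProduct_Fmat_mulVec (hf : ∀ i j, f i j = f j i) (y : ι → ℝ) :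
    2 * (y ⬝ᵥ Fmat G f p *ᵥ y) = stressForm (edgeForce G f p) y := by
  rw [stressForm_eq_neg_two_mul (edgeForce_comm G p hf), Fmat_mulVec, dotProduct]
  simp only [mul_neg, Finset.sum_neg_distrib]
  ring

end StressMatrix

open Matrix in
lemma one_le_nNeg_of_dotProduct_mulVec_neg {ι : Type*} [Fintype ι] [DecidableEq ι]
    {A : Matrix ι ι ℝ} (hA : A.IsHermitian) {y : ι → ℝ} (hy : y ⬝ᵥ A *ᵥ y < 0) :
    1 ≤ nNeg A := by
  have e1 : Fintype.ofFinite ι = ‹Fintype ι› := Subsingleton.elim _ _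
  have e2 : Classical.decEq ι = ‹DecidableEq ι› := Subsingleton.elim _ _
  rw [nNeg, e1, e2, dif_pos hA]
  refine Fintype.card_pos_iff.mpr (not_isEmpty_iff.mp fun h => hy.not_ge ?_)
  have hpsd : A.PosSemidef := hA.posSemidef_iff_eigenvalues_nonneg.mpr fun i =>
    not_lt.mp fun hi => h.elim ⟨i, hi⟩
  simpa using hpsd.dotProduct_mulVec_nonneg y

lemma hasFDerivAt_integral_norm {E F : Type*} [NormedAddCommGroup E] [NormedSpace ℝ E]
    [NormedAddCommGroup F] [InnerProductSpace ℝ F] {g : ℝ → ℝ} (hg : ContinuousOn g (Set.Ioi 0))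
    (L : E →L[ℝ] F) {p : E} (hp : L p ≠ 0) :
    HasFDerivAt (fun q => ∫ s in (1 : ℝ)..‖L q‖, s * g s)
      (g ‖L p‖ • (innerSL ℝ (L p)).comp L) p := by
  have hd : 0 < ‖L p‖ := norm_pos_iff.mpr hp
  have hcont : ContinuousOn (fun s => s * g s) (Set.Ioi 0) := continuousOn_id.mul hg
  have hsub : Set.uIcc 1 ‖L p‖ ⊆ Set.Ioi 0 := fun s hs => by
    rcases Set.mem_uIcc.mp hs with ⟨h, -⟩ | ⟨h, -⟩ <;> simp only [Set.mem_Ioi] <;> linarith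
  have hFTC : HasDerivAt (fun r => ∫ s in (1 : ℝ)..r, s * g s) (‖L p‖ * g ‖L p‖) ‖L p‖ :=
    intervalIntegral.integral_hasDerivAt_right ((hcont.mono hsub).intervalIntegrable)
      (hcont.stronglyMeasurableAtFilter isOpen_Ioi _ hd) (hcont.continuousAt (Ioi_mem_nhds hd))
  have hnorm : HasFDerivAt (fun q => ‖L q‖) (‖L p‖⁻¹ • (innerSL ℝ (L p)).comp L) p := by
    have h := (L.hasFDerivAt.norm_sq).sqrt (pow_ne_zero 2 hd.ne')
    simp only [Real.sqrt_sq (norm_nonneg _)] at h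
    refine h.congr_fderiv (ContinuousLinearMap.ext fun u => ?_)
    simp only [smul_apply, ContinuousLinearMap.comp_apply, innerSL_apply_apply, smul_eq_mul,
      nsmul_eq_mul, Nat.cast_ofNat]
    field_simp
  refine (hFTC.comp_hasFDerivAt p hnorm).congr_fderiv (ContinuousLinearMap.ext fun u => ?_)
  simp only [smul_apply, ContinuousLinearMap.comp_apply, innerSL_apply_apply, smul_eq_mul]
  field_simp

section Gradient
variable {ι : Type*} [Fintype ι]

noncomputable def ptCLM (i : ι) : Conf ι →L[ℝ] Pt :=
  LinearMap.toContinuousLinearMap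
    { toFun := fun q => pt q i, map_add' := fun _ _ => rfl, map_smul' := fun _ _ => rfl }

lemma ptCLM_apply (i : ι) (q : Conf ι) : ptCLM i q = pt q i := rfl

omit [Fintype ι] in
lemma inner_pt_sub_pt (p u : Conf ι) (i j : ι) : inner ℝ (pt p i - pt p j) (pt u i - pt u j) =
    ∑ c, (p (i, c) - p (j, c)) * (u (i, c) - u (j, c)) := by
  simp [PiLp.inner_apply, pt, mul_comm]

lemma formationField_apply (G : SimpleGraph ι) (f : ι → ι → ℝ → ℝ) (p : Conf ι) (i : ι)
    (c : Fin 2) :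
    formationField G f p (i, c) = netForce (edgeForce G f p) (fun j => p (j, c)) i := by
  simp only [formationField, netForce, edgeForce, ite_mul, zero_mul]

theorem hasGradientAt_potential {G : SimpleGraph ι} {f : ι → ι → ℝ → ℝ} {p : Conf ι}
    (hp : p ∈ configSpace G) (hf : ∀ i j, f i j = f j i)
    (hcont : ∀ i j, G.Adj i j → ContinuousOn (f i j) (Set.Ioi 0)) :
    HasGradientAt (potential G f) (-formationField G f p) p := by
  classical
  have hterm : ∀ i j, HasFDerivAt
      (fun q => if G.Adj i j then ∫ s in (1 : ℝ)..dist (pt q i) (pt q j), s * f i j s else 0)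
      (edgeForce G f p i j • (innerSL ℝ (pt p i - pt p j)).comp (ptCLM i - ptCLM j)) p := by
    intro i j
    by_cases h : G.Adj i j
    · simp only [if_pos h, edgeForce]
      simpa [dist_eq_norm, ptCLM_apply] using
        hasFDerivAt_integral_norm (hcont i j h) (ptCLM i - ptCLM j) (sub_ne_zero.mpr (hp i j h))
    · simp only [if_neg h, edgeForce, zero_smul]
      exact hasFDerivAt_const 0 p
  have hΦ : HasFDerivAt (potential G f) ((1 / 2 : ℝ) • ∑ i, ∑ j,
      edgeForce G f p i j • (innerSL ℝ (pt p i - pt p j)).comp (ptCLM i - ptCLM j)) p :=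
    (HasFDerivAt.fun_sum fun i _ => HasFDerivAt.fun_sum fun j _ => hterm i j).const_mul _
  refine hΦ.congr_fderiv (ContinuousLinearMap.ext fun u => ?_)
  have hsymm := edgeForce_comm G p hf
  calc ((1 / 2 : ℝ) • ∑ i, ∑ j,
        edgeForce G f p i j • (innerSL ℝ (pt p i - pt p j)).comp (ptCLM i - ptCLM j)) u
      = 1 / 2 * ∑ c, ∑ i, ∑ j, edgeForce G f p i j *
          ((p (i, c) - p (j, c)) * (u (i, c) - u (j, c))) := by
        simp only [smul_apply, FunLike.coe_sum, Finset.sum_apply,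
          ContinuousLinearMap.comp_apply, sub_apply, ptCLM_apply, innerSL_apply_apply,
          inner_pt_sub_pt, smul_eq_mul, Finset.mul_sum]
        conv_rhs => rw [Finset.sum_comm]
        refine Finset.sum_congr rfl fun i _ => ?_
        conv_rhs => rw [Finset.sum_comm]
    _ = -∑ c, ∑ i, u (i, c) * netForce (edgeForce G f p) (fun j => p (j, c)) i := by
        simp only [sum_sum_mul_sub_mul_sub hsymm, Finset.mul_sum, ← Finset.sum_neg_distrib]
        refine Finset.sum_congr rfl fun c _ => Finset.sum_congr rfl fun i _ => by ring
    _ = _ := by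
        simp only [InnerProductSpace.toDual_apply_apply, PiLp.inner_apply, Fintype.sum_prod_type,
          PiLp.neg_apply, formationField_apply, Real.inner_apply, neg_mul, Finset.sum_neg_distrib]
        rw [Finset.sum_comm]
        simp only [mul_comm]

end Gradient

namespace IsMonoAttRep
variable {g : ℝ → ℝ} (hg : IsMonoAttRep g) {d₀ d : ℝ}
include hg

lemma strictMonoOn_mul_self : StrictMonoOn (fun y => y * g y) (Set.Ioi 0) :=
  strictMonoOn_of_deriv_pos (convex_Ioi 0) (continuousOn_id.mul hg.contDiff.continuousOn)
    fun y hy => hg.deriv_pos y (by rwa [interior_Ioi] at hy)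

lemma le_of_nonneg (hd₀ : 0 < d₀) (hz : g d₀ = 0) (hd : 0 < d) (h : 0 ≤ g d) : d₀ ≤ d := by
  by_contra! hlt
  have := hg.strictMonoOn_mul_self hd hd₀ hlt
  simp only [hz, mul_zero] at this
  nlinarith

lemma le_of_nonpos (hd₀ : 0 < d₀) (hz : g d₀ = 0) (hd : 0 < d) (h : g d ≤ 0) : d ≤ d₀ := by
  by_contra! hlt
  have := hg.strictMonoOn_mul_self hd₀ hd hlt
  simp only [hz, mul_zero] at this
  nlinarith

end IsMonoAttRep

lemma dist_pt_eq_abs {ι : Type*} {p : Conf ι} (hline : ∀ i, p (i, 1) = 0) (i j : ι) :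
    dist (pt p i) (pt p j) = |p (i, 0) - p (j, 0)| := by
  simp [EuclideanSpace.dist_eq, Fin.sum_univ_two, pt, hline, Real.dist_eq, Real.sqrt_sq_eq_abs]

section Formation
variable {ι : Type*} [Fintype ι] [DecidableEq ι] {G : SimpleGraph ι} {f : ι → ι → ℝ → ℝ}
  {dbar : ι → ι → ℝ} {p : Conf ι}

lemma IsTriFormation.isLineStress (hsys : IsTriFormation G f dbar) (hp : p ∈ configSpace G)
    (hcrit : gradient (potential G f) p = 0) (hline : ∀ i, p (i, 1) = 0) :
    IsLineStress G (fun i => p (i, 0)) Set.univ (edgeForce G f p) := by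
  have hlen : ∀ u v, G.Adj u v →
      (0 ≤ edgeForce G f p u v → dbar u v ≤ |p (u, 0) - p (v, 0)|) ∧
      (edgeForce G f p u v ≤ 0 → |p (u, 0) - p (v, 0)| ≤ dbar u v) := fun u v h => by
    have hd := dist_pt_eq_abs hline u v ▸ dist_pos.mpr (hp u v h)
    rw [edgeForce, if_pos h, dist_pt_eq_abs hline]
    have hf := hsys.mono u v h
    exact ⟨hf.le_of_nonneg (hsys.dpos u v h) (hsys.fzero u v h) hd,
      hf.le_of_nonpos (hsys.dpos u v h) (hsys.fzero u v h) hd⟩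
  have hF : formationField G f p = 0 := by
    rw [← neg_eq_zero, ← hcrit, (hasGradientAt_potential hp hsys.fsymm
      fun i j h => (hsys.mono i j h).contDiff.continuousOn).gradient]
  refine ⟨edgeForce_comm G p hsys.fsymm, fun i j hij => ?_, fun i => ?_, ?_⟩
  · refine ⟨by_contra fun h => hij ?_, trivial, trivial⟩
    simp [edgeForce, h]
  · rw [← formationField_apply, hF]
    rfl
  · intro i j k _ _ _ hij hik hjk hik' hkj'
    by_contra! h
    have h1 := (hlen i k hik).1 h.1
    have h2 := (hlen k j hjk.symm).1 h.2.1
    have h3 := (hlen i j hij).2 h.2.2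
    rw [abs_sub_comm, abs_of_pos (by linarith)] at h1 h2 h3
    linarith [(hsys.triangle i j k ⟨hij, hik, hjk⟩).2.2, hsys.dsymm j k]

end Formation

/-- Proposition 4.6 of the paper. For a triangulated formation system
with at least three agents, if `p` is a critical point of the potential `Φ` which is a line
configuration lying on the first coordinate axis, then the matrix `F_p` has at least one
negative eigenvalue. -/
theorem stmt19 {ι : Type*} [Fintype ι] [DecidableEq ι] (G : SimpleGraph ι)
    (f : ι → ι → ℝ → ℝ) (dbar : ι → ι → ℝ) (hsys : IsTriFormation G f dbar)
    (hn : 3 ≤ Fintype.card ι)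
    (p : Conf ι) (hp : p ∈ configSpace G)
    (hcrit : gradient (potential G f) p = 0)
    (hline : ∀ i : ι, p (i, (1 : Fin 2)) = 0) :
    1 ≤ nNeg (Fmat G f p) := by
  have hx : ∀ i j, G.Adj i j → p (i, 0) ≠ p (j, 0) := fun i j h heq =>
    hp i j h (dist_eq_zero.mp (by rw [dist_pt_eq_abs hline, heq, sub_self, abs_zero]))
  obtain ⟨y, hy⟩ := hsys.laman.exists_stressForm_neg hx (by rwa [Nat.card_eq_fintype_card])
    (hsys.isLineStress hp hcrit hline)
  refine one_le_nNeg_of_dotProduct_mulVec_neg (Fmat_isHermitian G p hsys.fsymm) (y := y) ?_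
  linarith [two_mul_dotProduct_Fmat_mulVec G p hsys.fsymm y]
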